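/- Let 0 < T < 1 and R > 0. For every t ∈ (0,T] and every x ∈ [−R, R]^d, the time derivative of the velocity field satisfies ‖∂_t v*(x, t)‖ ≤ √d (1+T²) R/(1−T²)² + 2√d T/(1−T²)² + 2 d^{3/2} (1+T²) R/(1−T²)³ + 2 d^{3/2} T/(1−T²)³; in particular sup_{t ∈ (0,T]} sup_{x ∈ [−R,R]^d} ‖∂_t v*(x, t)‖ = O(R/(1−T)³). -/

import Mathlib

open MeasureTheory

/-- The Gaussian kernel `g_t(x, x₁) = exp(-‖x - t x₁‖² / (2(1-t²)))`. -/
noncomputable def gKer (d : ℕ) (t : ℝ) (x x₁ : EuclideanSpace ℝ (Fin d)) : ℝ :=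
  Real.exp (-‖x - t • x₁‖ ^ 2 / (2 * (1 - t ^ 2)))

/-- `φ_t(x) = ∫ g_t(x, x₁) dπ₁(x₁)`. -/
noncomputable def phiFn (d : ℕ) (π₁ : MeasureTheory.Measure (EuclideanSpace ℝ (Fin d))) (t : ℝ)
    (x : EuclideanSpace ℝ (Fin d)) : ℝ :=
  ∫ x₁, gKer d t x x₁ ∂π₁

/-- `m_t(x) = φ_t(x)⁻¹ ∫ x₁ g_t(x, x₁) dπ₁(x₁)`. -/
noncomputable def mFn (d : ℕ) (π₁ : MeasureTheory.Measure (EuclideanSpace ℝ (Fin d))) (t : ℝ)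
    (x : EuclideanSpace ℝ (Fin d)) : EuclideanSpace ℝ (Fin d) :=
  (phiFn d π₁ t x)⁻¹ • ∫ x₁, gKer d t x x₁ • x₁ ∂π₁

/-- The velocity field `v*(x, t) = (1/(1-t²)) m_t(x) - (t/(1-t²)) x`. -/
noncomputable def vStar (d : ℕ) (π₁ : MeasureTheory.Measure (EuclideanSpace ℝ (Fin d)))
    (x : EuclideanSpace ℝ (Fin d)) (t : ℝ) : EuclideanSpace ℝ (Fin d) :=
  (1 / (1 - t ^ 2)) • mFn d π₁ t x - (t / (1 - t ^ 2)) • x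

/-!
Differentiating `v*(x, t) = (m_t(x) - t x) / (1 - t²)` gives
`∂ₜ v* = ∂ₜ m_t / (1 - t²) + 2t m_t / (1 - t²)² - (1 + t²) x / (1 - t²)²`.
Differentiating under the integral, `∂ₜ m_t = φ_t⁻¹ ∫ g_t ∂ₜ(log g_t) (x₁ - m_t) dπ₁` is the
posterior covariance of `x₁` and `∂ₜ log g_t`, so the log-derivative may be shifted by any
constant. Subtracting `((1 + t²)⟪x, m_t⟫ - t‖x‖²) / (1 - t²)²` leaves
`((1 + t²)⟪x, x₁ - m_t⟫ - t‖x₁‖²) / (1 - t²)²`. Since `x₁` and `m_t` both lie in the unit cube,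
`‖x₁ - m_t‖ ≤ √d`, `‖x₁‖² ≤ d` and `|⟪x, x₁ - m_t⟫| ≤ d R`, which yields the `d^{3/2}` terms.
-/

open MeasureTheory Metric Set
open scoped RealInnerProductSpace

theorem EuclideanSpace.norm_le_sqrt_card_mul {ι : Type*} [Fintype ι] {C : ℝ} (hC : 0 ≤ C)
    {y : EuclideanSpace ℝ ι} (hy : ∀ i, |y i| ≤ C) : ‖y‖ ≤ √(Fintype.card ι) * C := by
  rw [EuclideanSpace.norm_eq]
  calc √(∑ i, ‖y i‖ ^ 2) ≤ √(∑ _i : ι, C ^ 2) := by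
        gcongr with i
        simpa using hy i
    _ = √(Fintype.card ι) * C := by
        simp [Real.sqrt_mul, Real.sqrt_sq hC]

theorem EuclideanSpace.norm_sub_le_sqrt_card_of_mem_Icc {ι : Type*} [Fintype ι]
    {y z : EuclideanSpace ℝ ι} (hy : ∀ i, y i ∈ Icc (0 : ℝ) 1) (hz : ∀ i, z i ∈ Icc (0 : ℝ) 1) :
    ‖y - z‖ ≤ √(Fintype.card ι) := by
  simpa using EuclideanSpace.norm_le_sqrt_card_mul zero_le_one fun i =>
    abs_sub_le_of_nonneg_of_le (hy i).1 (hy i).2 (hz i).1 (hz i).2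

section WeightedMean

variable {α : Type*} [MeasurableSpace α] {μ : Measure α} {w : α → ℝ}

theorem norm_inv_integral_smul_integral_smul_le {F : Type*} [NormedAddCommGroup F]
    [NormedSpace ℝ F] (hw : 0 ≤ᵐ[μ] w) (hwi : Integrable w μ) (hpos : 0 < ∫ a, w a ∂μ)
    {v : α → F} {c : ℝ} (hv : ∀ᵐ a ∂μ, ‖v a‖ ≤ c) :
    ‖(∫ a, w a ∂μ)⁻¹ • ∫ a, w a • v a ∂μ‖ ≤ c := by
  have hint : ‖∫ a, w a • v a ∂μ‖ ≤ (∫ a, w a ∂μ) * c :=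
    calc ‖∫ a, w a • v a ∂μ‖ ≤ ∫ a, ‖w a • v a‖ ∂μ := norm_integral_le_integral_norm _
      _ ≤ ∫ a, w a * c ∂μ := by
          refine integral_mono_of_nonneg (ae_of_all _ fun _ => norm_nonneg _)
            (hwi.mul_const c) ?_
          filter_upwards [hw, hv] with a hwa hva
          rw [norm_smul, Real.norm_eq_abs, abs_of_nonneg hwa]
          exact mul_le_mul_of_nonneg_left hva hwa
      _ = (∫ a, w a ∂μ) * c := integral_mul_const c w
  rw [norm_smul, norm_inv, Real.norm_eq_abs, abs_of_pos hpos, inv_mul_le_iff₀ hpos]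
  exact hint

theorem inv_integral_mul_integral_mul_mem_Icc (hw : 0 ≤ᵐ[μ] w) (hwi : Integrable w μ)
    (hpos : 0 < ∫ a, w a ∂μ) {v : α → ℝ} (hwv : Integrable (fun a => w a * v a) μ) {a b : ℝ}
    (hv : ∀ᵐ x ∂μ, v x ∈ Icc a b) :
    (∫ x, w x ∂μ)⁻¹ * ∫ x, w x * v x ∂μ ∈ Icc a b := by
  have hlower : (∫ x, w x ∂μ) * a ≤ ∫ x, w x * v x ∂μ := by
    rw [← integral_mul_const]
    refine integral_mono_ae (hwi.mul_const a) hwv ?_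
    filter_upwards [hw, hv] with x hwx hvx using mul_le_mul_of_nonneg_left hvx.1 hwx
  have hupper : ∫ x, w x * v x ∂μ ≤ (∫ x, w x ∂μ) * b := by
    rw [← integral_mul_const]
    refine integral_mono_ae hwv (hwi.mul_const b) ?_
    filter_upwards [hw, hv] with x hwx hvx using mul_le_mul_of_nonneg_left hvx.2 hwx
  exact ⟨(le_inv_mul_iff₀ hpos).2 hlower, (inv_mul_le_iff₀ hpos).2 hupper⟩

end WeightedMean

noncomputable def gKerLogDeriv (d : ℕ) (t : ℝ) (x y : EuclideanSpace ℝ (Fin d)) : ℝ :=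
  ((1 + t ^ 2) * ⟪x, y⟫ - t * ‖y‖ ^ 2 - t * ‖x‖ ^ 2) / (1 - t ^ 2) ^ 2

section Kernel

variable {d : ℕ} {s t : ℝ} {x y : EuclideanSpace ℝ (Fin d)}

theorem gKer_pos : 0 < gKer d t x y := Real.exp_pos _

theorem gKer_le_one (ht : |t| < 1) : gKer d t x y ≤ 1 := by
  have : 0 < 1 - t ^ 2 := by nlinarith [sq_abs t, abs_nonneg t]
  exact Real.exp_le_one_iff.2 (div_nonpos_of_nonpos_of_nonneg (by simp) (by positivity))

theorem continuous_gKer : Continuous (gKer d t x) := by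
  unfold gKer; fun_prop

theorem continuous_gKerLogDeriv : Continuous (gKerLogDeriv d t x) := by
  unfold gKerLogDeriv; fun_prop

theorem hasDerivAt_gKer (ht : |t| < 1) :
    HasDerivAt (fun s => gKer d s x y) (gKer d t x y * gKerLogDeriv d t x y) t := by
  have h1 : 1 - t ^ 2 ≠ 0 := by nlinarith [sq_abs t, abs_nonneg t]
  have hsq : HasDerivAt (fun s : ℝ => ‖x - s • y‖ ^ 2) (2 * ⟪x - t • y, -y⟫) t :=
    ((hasDerivAt_id t).smul_const y).const_sub x |>.norm_sq |>.congr_deriv (by simp)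
  have hden : HasDerivAt (fun s : ℝ => 2 * (1 - s ^ 2)) (2 * (0 - 2 * t)) t := by
    simpa using ((hasDerivAt_pow 2 t).const_sub 1).const_mul 2
  have hexp : HasDerivAt (fun s : ℝ => -‖x - s • y‖ ^ 2 / (2 * (1 - s ^ 2)))
      ((-(2 * ⟪x - t • y, -y⟫) * (2 * (1 - t ^ 2)) - -‖x - t • y‖ ^ 2 * (2 * (0 - 2 * t))) /
        (2 * (1 - t ^ 2)) ^ 2) t :=
    hsq.neg.fun_div hden (by simpa using h1)
  refine hexp.exp.congr_deriv ?_
  simp only [gKer, gKerLogDeriv]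
  congr 1
  rw [inner_sub_left, inner_neg_right, inner_neg_right, real_inner_smul_left,
    real_inner_self_eq_norm_sq, norm_sub_sq_real, real_inner_smul_right, norm_smul,
    Real.norm_eq_abs, mul_pow, sq_abs]
  field_simp
  ring

theorem abs_gKerLogDeriv_le {τ ρ : ℝ} (hs : |s| ≤ τ) (hτ : τ < 1) (hy : ‖y‖ ≤ ρ) :
    |gKerLogDeriv d s x y| ≤ (‖x‖ + ρ) ^ 2 / (1 - τ ^ 2) ^ 2 := by
  have hτ0 : 0 ≤ τ := (abs_nonneg s).trans hs
  have hgap : 0 < 1 - τ ^ 2 := by nlinarith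
  have hgap_le : 1 - τ ^ 2 ≤ 1 - s ^ 2 := by nlinarith [sq_abs s, abs_nonneg s]
  have hnum : |(1 + s ^ 2) * ⟪x, y⟫ - s * ‖y‖ ^ 2 - s * ‖x‖ ^ 2| ≤ (‖x‖ + ‖y‖) ^ 2 := by
    have hs1 : |s| ≤ 1 := by linarith
    have hss : s ^ 2 ≤ 1 := by nlinarith [sq_abs s, abs_nonneg s]
    have hcs := abs_real_inner_le_norm x y
    calc _ ≤ (1 + s ^ 2) * |⟪x, y⟫| + |s| * ‖y‖ ^ 2 + |s| * ‖x‖ ^ 2 := by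
          refine (abs_sub _ _).trans (add_le_add ((abs_sub _ _).trans ?_) ?_)
          · rw [abs_mul, abs_mul, abs_of_pos (by positivity : (0 : ℝ) < 1 + s ^ 2),
              abs_of_nonneg (by positivity : (0 : ℝ) ≤ ‖y‖ ^ 2)]
          · rw [abs_mul, abs_of_nonneg (by positivity : (0 : ℝ) ≤ ‖x‖ ^ 2)]
      _ ≤ 2 * (‖x‖ * ‖y‖) + 1 * ‖y‖ ^ 2 + 1 * ‖x‖ ^ 2 := by gcongr; linarith
      _ = (‖x‖ + ‖y‖) ^ 2 := by ring
  rw [gKerLogDeriv, abs_div, abs_of_pos (pow_pos (hgap.trans_le hgap_le) 2)]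
  gcongr
  exact hnum.trans (by gcongr)

end Kernel

noncomputable def mFnDeriv (d : ℕ) (μ : Measure (EuclideanSpace ℝ (Fin d))) (t : ℝ)
    (x : EuclideanSpace ℝ (Fin d)) : EuclideanSpace ℝ (Fin d) :=
  (phiFn d μ t x)⁻¹ • ∫ y, (gKer d t x y * gKerLogDeriv d t x y) • (y - mFn d μ t x) ∂μ

section Integrals

variable {d : ℕ} {μ : Measure (EuclideanSpace ℝ (Fin d))} {t ρ C : ℝ}
  {x : EuclideanSpace ℝ (Fin d)} {F : Type*} [NormedAddCommGroup F] [NormedSpace ℝ F]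
  {h : EuclideanSpace ℝ (Fin d) → F}

theorem integrable_gKer_smul [IsFiniteMeasure μ] (ht : |t| < 1) (hh : AEStronglyMeasurable h μ)
    (hC : ∀ᵐ y ∂μ, ‖h y‖ ≤ C) : Integrable (fun y => gKer d t x y • h y) μ := by
  refine (integrable_const C).mono' (continuous_gKer.aestronglyMeasurable.smul hh) ?_
  filter_upwards [hC] with y hy
  rw [norm_smul, Real.norm_eq_abs, abs_of_pos gKer_pos]
  exact (mul_le_of_le_one_left (norm_nonneg _) (gKer_le_one ht)).trans hy

theorem integrable_gKer [IsFiniteMeasure μ] (ht : |t| < 1) : Integrable (gKer d t x) μ := by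
  simpa using integrable_gKer_smul (μ := μ) (x := x) (C := 1) ht
    (aestronglyMeasurable_const (b := (1 : ℝ))) (by simp)

theorem phiFn_pos [IsFiniteMeasure μ] [NeZero μ] (ht : |t| < 1) : 0 < phiFn d μ t x :=
  integral_exp_pos (integrable_gKer ht)

theorem hasDerivAt_integral_gKer_smul [IsFiniteMeasure μ] [CompleteSpace F]
    (hρ : ∀ᵐ y ∂μ, ‖y‖ ≤ ρ) (hh : AEStronglyMeasurable h μ) (hC : ∀ᵐ y ∂μ, ‖h y‖ ≤ C)
    (ht : |t| < 1) :
    Integrable (fun y => (gKer d t x y * gKerLogDeriv d t x y) • h y) μ ∧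
      HasDerivAt (fun s => ∫ y, gKer d s x y • h y ∂μ)
        (∫ y, (gKer d t x y * gKerLogDeriv d t x y) • h y ∂μ) t := by
  set τ := (1 + |t|) / 2 with hτ
  have hball : ∀ s ∈ ball t ((1 - |t|) / 2), |s| ≤ τ ∧ |s| < 1 := by
    intro s hs
    rw [mem_ball, Real.dist_eq] at hs
    have := abs_sub_abs_le_abs_sub s t
    constructor <;> linarith
  have hbound : ∀ᵐ y ∂μ, ∀ s ∈ ball t ((1 - |t|) / 2),
      ‖(gKer d s x y * gKerLogDeriv d s x y) • h y‖ ≤ (‖x‖ + ρ) ^ 2 / (1 - τ ^ 2) ^ 2 * C := by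
    filter_upwards [hρ, hC] with y hy hhy s hs
    rw [norm_smul]
    refine mul_le_mul ?_ hhy (norm_nonneg _) (by positivity)
    rw [norm_mul, Real.norm_eq_abs, Real.norm_eq_abs, abs_of_pos gKer_pos]
    exact (mul_le_of_le_one_left (abs_nonneg _) (gKer_le_one (hball s hs).2)).trans
      (abs_gKerLogDeriv_le (hball s hs).1 (by linarith) hy)
  exact hasDerivAt_integral_of_dominated_loc_of_deriv_le
    (F := fun s y => gKer d s x y • h y)
    (F' := fun s y => (gKer d s x y * gKerLogDeriv d s x y) • h y)
    (ball_mem_nhds t (by linarith))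
    (Filter.Eventually.of_forall fun s => continuous_gKer.aestronglyMeasurable.smul hh)
    (integrable_gKer_smul ht hh hC)
    ((continuous_gKer.mul continuous_gKerLogDeriv).aestronglyMeasurable.smul hh) hbound
    (integrable_const _) (ae_of_all _ fun y s hs => (hasDerivAt_gKer (hball s hs).2).smul_const _)

theorem hasDerivAt_phiFn [IsFiniteMeasure μ] (hρ : ∀ᵐ y ∂μ, ‖y‖ ≤ ρ) (ht : |t| < 1) :
    Integrable (fun y => gKer d t x y * gKerLogDeriv d t x y) μ ∧
      HasDerivAt (fun s => phiFn d μ s x) (∫ y, gKer d t x y * gKerLogDeriv d t x y ∂μ) t := by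
  simpa [phiFn] using hasDerivAt_integral_gKer_smul (x := x) (C := 1) hρ
    (aestronglyMeasurable_const (b := (1 : ℝ))) (by simp) ht

theorem hasDerivAt_mFn [IsFiniteMeasure μ] [NeZero μ] (hρ : ∀ᵐ y ∂μ, ‖y‖ ≤ ρ)
    (ht : |t| < 1) : HasDerivAt (fun s => mFn d μ s x) (mFnDeriv d μ t x) t := by
  obtain ⟨hφ'_int, hφ⟩ := hasDerivAt_phiFn (x := x) hρ ht
  obtain ⟨hN'_int, hN⟩ := hasDerivAt_integral_gKer_smul (x := x) hρ aestronglyMeasurable_id hρ ht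
  simp only [id_eq] at hN'_int hN
  have hφ0 : phiFn d μ t x ≠ 0 := (phiFn_pos ht).ne'
  refine ((hφ.inv hφ0).smul hN).congr_deriv ?_
  simp_rw [mFnDeriv, Pi.inv_apply, smul_sub]
  rw [integral_sub hN'_int (hφ'_int.smul_const _), integral_smul_const, mFn]
  module

theorem integral_gKer_smul_sub_mFn [IsFiniteMeasure μ] [NeZero μ] (hρ : ∀ᵐ y ∂μ, ‖y‖ ≤ ρ)
    (ht : |t| < 1) : ∫ y, gKer d t x y • (y - mFn d μ t x) ∂μ = 0 := by
  simp_rw [smul_sub]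
  rw [integral_sub (integrable_gKer_smul (h := fun y => y) ht aestronglyMeasurable_id hρ)
    ((integrable_gKer ht).smul_const _), integral_smul_const]
  change _ - phiFn d μ t x • ((phiFn d μ t x)⁻¹ • _) = _
  rw [smul_smul, mul_inv_cancel₀ (phiFn_pos ht).ne', one_smul, sub_self]

end Integrals

section UnitCube

variable {d : ℕ} {μ : Measure (EuclideanSpace ℝ (Fin d))} {t : ℝ}
  {x : EuclideanSpace ℝ (Fin d)}

theorem ae_norm_le_sqrt_of_ae_mem_Icc (hμ : ∀ᵐ y ∂μ, ∀ i, y i ∈ Icc (0 : ℝ) 1) :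
    ∀ᵐ y ∂μ, ‖y‖ ≤ √d := by
  filter_upwards [hμ] with y hy
  simpa using EuclideanSpace.norm_sub_le_sqrt_card_of_mem_Icc hy (z := 0) (by simp)

theorem mFn_apply_mem_Icc [IsFiniteMeasure μ] [NeZero μ]
    (hμ : ∀ᵐ y ∂μ, ∀ i, y i ∈ Icc (0 : ℝ) 1) (ht : |t| < 1) (i : Fin d) :
    mFn d μ t x i ∈ Icc (0 : ℝ) 1 := by
  have hint : ∀ j, Integrable (fun y => gKer d t x y * y j) μ := fun j =>
    integrable_gKer_smul (h := fun y => y j) (C := 1) ht (by fun_prop)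
      (hμ.mono fun y hy => by simpa using abs_le.2 ⟨by linarith [(hy j).1], (hy j).2⟩)
  rw [mFn, PiLp.smul_apply, smul_eq_mul, eval_integral_piLp (by simpa using hint)]
  exact inv_integral_mul_integral_mul_mem_Icc (ae_of_all _ fun _ => gKer_pos.le)
    (integrable_gKer ht) (phiFn_pos ht) (hint i) (hμ.mono fun y hy => hy i)

theorem norm_mFnDeriv_le [IsFiniteMeasure μ] [NeZero μ]
    (hμ : ∀ᵐ y ∂μ, ∀ i, y i ∈ Icc (0 : ℝ) 1) (ht : |t| < 1) {R : ℝ} (hR : 0 ≤ R)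
    (hx : ∀ i, |x i| ≤ R) :
    ‖mFnDeriv d μ t x‖ ≤ d * √d * ((1 + t ^ 2) * R + |t|) / (1 - t ^ 2) ^ 2 := by
  set m := mFn d μ t x
  set K := ((1 + t ^ 2) * ⟪x, m⟫ - t * ‖x‖ ^ 2) / (1 - t ^ 2) ^ 2
  have hρ := ae_norm_le_sqrt_of_ae_mem_Icc hμ
  have hm := mFn_apply_mem_Icc (x := x) hμ ht
  have hym : ∀ᵐ y ∂μ, ‖y - m‖ ≤ √d := hμ.mono fun y hy => by
    simpa using EuclideanSpace.norm_sub_le_sqrt_card_of_mem_Icc hy hm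
  have hcenter : ∫ y, (gKer d t x y * gKerLogDeriv d t x y) • (y - m) ∂μ
      = ∫ y, gKer d t x y • ((gKerLogDeriv d t x y - K) • (y - m)) ∂μ := by
    have hA := (hasDerivAt_integral_gKer_smul (x := x) hρ (h := fun y => y - m) (by fun_prop)
      hym ht).1
    have hB : Integrable (fun y => K • (gKer d t x y • (y - m))) μ :=
      (integrable_gKer_smul ht (h := fun y => y - m) (by fun_prop) hym).smul K
    calc _ = ∫ y, (gKer d t x y * gKerLogDeriv d t x y) • (y - m) ∂μ
          - K • ∫ y, gKer d t x y • (y - m) ∂μ := by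
          rw [integral_gKer_smul_sub_mFn hρ ht, smul_zero, sub_zero]
      _ = _ := by
          rw [← integral_smul, ← integral_sub hA hB]
          refine integral_congr_ae (ae_of_all _ fun y => ?_)
          module
  rw [mFnDeriv, hcenter]
  refine norm_inv_integral_smul_integral_smul_le (ae_of_all _ fun _ => gKer_pos.le)
    (integrable_gKer ht) (phiFn_pos ht) ?_
  filter_upwards [hρ, hym] with y hy hy_m
  have hxn : ‖x‖ ≤ √d * R := by simpa using EuclideanSpace.norm_le_sqrt_card_mul hR hx
  have hgap : 0 < (1 - t ^ 2) ^ 2 := pow_pos (by nlinarith [sq_abs t, abs_nonneg t]) 2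
  have hnum : |(1 + t ^ 2) * ⟪x, y - m⟫ - t * ‖y‖ ^ 2| ≤ d * ((1 + t ^ 2) * R + |t|) :=
    calc _ ≤ (1 + t ^ 2) * (‖x‖ * ‖y - m‖) + |t| * ‖y‖ ^ 2 := by
          refine (abs_sub _ _).trans (add_le_add ?_ ?_)
          · rw [abs_mul, abs_of_pos (by positivity : (0 : ℝ) < 1 + t ^ 2)]
            gcongr
            exact abs_real_inner_le_norm x (y - m)
          · rw [abs_mul, abs_of_nonneg (by positivity : (0 : ℝ) ≤ ‖y‖ ^ 2)]
      _ ≤ (1 + t ^ 2) * ((√d * R) * √d) + |t| * √d ^ 2 := by gcongr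
      _ = d * ((1 + t ^ 2) * R + |t|) := by
          rw [Real.sq_sqrt (Nat.cast_nonneg d)]
          linear_combination (1 + t ^ 2) * R * Real.sq_sqrt (Nat.cast_nonneg d)
  have hK : gKerLogDeriv d t x y - K
      = ((1 + t ^ 2) * ⟪x, y - m⟫ - t * ‖y‖ ^ 2) / (1 - t ^ 2) ^ 2 := by
    rw [gKerLogDeriv, inner_sub_right]
    ring
  rw [norm_smul, Real.norm_eq_abs, hK, abs_div, abs_of_pos hgap, mul_comm_div, mul_div_assoc]
  calc |(1 + t ^ 2) * ⟪x, y - m⟫ - t * ‖y‖ ^ 2| * (‖y - m‖ / (1 - t ^ 2) ^ 2)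
      ≤ d * ((1 + t ^ 2) * R + |t|) * (√d / (1 - t ^ 2) ^ 2) := by gcongr
    _ = _ := by ring

theorem hasDerivAt_vStar {m' : EuclideanSpace ℝ (Fin d)}
    (hm : HasDerivAt (fun s => mFn d μ s x) m' t) (ht : |t| < 1) :
    HasDerivAt (vStar d μ x) ((1 / (1 - t ^ 2)) • m' + (2 * t / (1 - t ^ 2) ^ 2) • mFn d μ t x
      - ((1 + t ^ 2) / (1 - t ^ 2) ^ 2) • x) t := by
  have h1 : 1 - t ^ 2 ≠ 0 := by nlinarith [sq_abs t, abs_nonneg t]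
  have hden : HasDerivAt (fun s : ℝ => 1 - s ^ 2) (-(2 * t)) t := by
    simpa using (hasDerivAt_pow 2 t).const_sub 1
  have hinv : HasDerivAt (fun s : ℝ => 1 / (1 - s ^ 2)) (2 * t / (1 - t ^ 2) ^ 2) t :=
    ((hasDerivAt_const t (1 : ℝ)).fun_div hden h1).congr_deriv (by ring)
  have hquot : HasDerivAt (fun s : ℝ => s / (1 - s ^ 2)) ((1 + t ^ 2) / (1 - t ^ 2) ^ 2) t :=
    ((hasDerivAt_id' t).fun_div hden h1).congr_deriv (by ring)
  exact (hinv.smul hm).sub (hquot.smul_const x)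

theorem norm_deriv_vStar_le [IsFiniteMeasure μ] [NeZero μ]
    (hμ : ∀ᵐ y ∂μ, ∀ i, y i ∈ Icc (0 : ℝ) 1) (ht : |t| < 1) {R : ℝ} (hR : 0 ≤ R)
    (hx : ∀ i, |x i| ≤ R) :
    ‖deriv (vStar d μ x) t‖
      ≤ √d * (1 + t ^ 2) * R / (1 - t ^ 2) ^ 2 + 2 * √d * |t| / (1 - t ^ 2) ^ 2
        + d * √d * (1 + t ^ 2) * R / (1 - t ^ 2) ^ 3 + d * √d * |t| / (1 - t ^ 2) ^ 3 := by
  have hgap : 0 < 1 - t ^ 2 := by nlinarith [sq_abs t, abs_nonneg t]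
  have hm' := norm_mFnDeriv_le hμ ht hR hx
  have hm : ‖mFn d μ t x‖ ≤ √d := by
    simpa using EuclideanSpace.norm_sub_le_sqrt_card_of_mem_Icc (mFn_apply_mem_Icc hμ ht)
      (z := 0) (by simp)
  have hxn : ‖x‖ ≤ √d * R := by simpa using EuclideanSpace.norm_le_sqrt_card_mul hR hx
  rw [(hasDerivAt_vStar (hasDerivAt_mFn (ae_norm_le_sqrt_of_ae_mem_Icc hμ) ht) ht).deriv]
  calc _ ≤ 1 / (1 - t ^ 2) * (d * √d * ((1 + t ^ 2) * R + |t|) / (1 - t ^ 2) ^ 2)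
        + 2 * |t| / (1 - t ^ 2) ^ 2 * √d + (1 + t ^ 2) / (1 - t ^ 2) ^ 2 * (√d * R) := by
        refine (norm_sub_le _ _).trans (add_le_add ((norm_add_le _ _).trans (add_le_add ?_ ?_)) ?_)
        · rw [norm_smul_of_nonneg (one_div_nonneg.2 hgap.le)]; gcongr
        · rw [norm_smul, Real.norm_eq_abs, abs_div, abs_mul, abs_two, abs_of_pos (pow_pos hgap 2)]
          gcongr
        · rw [norm_smul_of_nonneg (by positivity)]; gcongr
    _ = _ := by field_simp; ring

end UnitCube

theorem time_derivative_velocity_bound_general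
    (d : ℕ)
    (π₁ : Measure (EuclideanSpace ℝ (Fin d))) [IsProbabilityMeasure π₁]
    (hsupp : ∀ᵐ x₁ ∂π₁, ∀ i, x₁ i ∈ Set.Icc (0 : ℝ) 1)
    (T R : ℝ) (hT1 : T < 1) (hR : 0 < R)
    (t : ℝ) (ht : t ∈ Set.Ioc (0 : ℝ) T)
    (x : EuclideanSpace ℝ (Fin d)) (hx : ∀ i, x i ∈ Set.Icc (-R) R) :
    ‖deriv (fun s => vStar d π₁ x s) t‖
      ≤ Real.sqrt d * (1 + T ^ 2) * R / (1 - T ^ 2) ^ 2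
        + 2 * Real.sqrt d * T / (1 - T ^ 2) ^ 2
        + 2 * ((d : ℝ) * Real.sqrt d) * (1 + T ^ 2) * R / (1 - T ^ 2) ^ 3
        + 2 * ((d : ℝ) * Real.sqrt d) * T / (1 - T ^ 2) ^ 3 := by
  obtain ⟨ht0, htT⟩ := ht
  have hT0 : 0 ≤ T := ht0.le.trans htT
  have hgapT : 0 < 1 - T ^ 2 := by nlinarith
  have hgap_le : 1 - T ^ 2 ≤ 1 - t ^ 2 := by nlinarith
  have hbound := norm_deriv_vStar_le hsupp (by rw [abs_of_pos ht0]; linarith) hR.le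
    fun i => abs_le.2 (hx i)
  rw [abs_of_pos ht0] at hbound
  calc _ ≤ _ := hbound
    _ ≤ √d * (1 + T ^ 2) * R / (1 - T ^ 2) ^ 2 + 2 * √d * T / (1 - T ^ 2) ^ 2
        + d * √d * (1 + T ^ 2) * R / (1 - T ^ 2) ^ 3 + d * √d * T / (1 - T ^ 2) ^ 3 := by
        gcongr
    _ ≤ _ := by
        have hR₃ : 0 ≤ d * √d * (1 + T ^ 2) * R / (1 - T ^ 2) ^ 3 := by positivity
        have hT₃ : 0 ≤ d * √d * T / (1 - T ^ 2) ^ 3 := by positivity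
        linear_combination hR₃ + hT₃

/-- For `0 < T < 1`, `R > 0`, every `t ∈ (0,T]` and every `x ∈ [-R,R]^d`, the time
derivative of the velocity field satisfies
`‖∂ₜ v*(x,t)‖ ≤ √d(1+T²)R/(1-T²)² + 2√d T/(1-T²)² + 2d^{3/2}(1+T²)R/(1-T²)³
+ 2d^{3/2} T/(1-T²)³`  (which is `O(R/(1-T)³)`). -/
theorem time_derivative_velocity_bound
    (d : ℕ) (hd : 1 ≤ d)
    (π₁ : Measure (EuclideanSpace ℝ (Fin d))) [IsProbabilityMeasure π₁]
    (hsupp : ∀ᵐ x₁ ∂π₁, ∀ i, x₁ i ∈ Set.Icc (0 : ℝ) 1)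
    (T R : ℝ) (hT0 : 0 < T) (hT1 : T < 1) (hR : 0 < R)
    (t : ℝ) (ht : t ∈ Set.Ioc (0 : ℝ) T)
    (x : EuclideanSpace ℝ (Fin d)) (hx : ∀ i, x i ∈ Set.Icc (-R) R) :
    ‖deriv (fun s => vStar d π₁ x s) t‖
      ≤ Real.sqrt d * (1 + T ^ 2) * R / (1 - T ^ 2) ^ 2
        + 2 * Real.sqrt d * T / (1 - T ^ 2) ^ 2
        + 2 * ((d : ℝ) * Real.sqrt d) * (1 + T ^ 2) * R / (1 - T ^ 2) ^ 3
        + 2 * ((d : ℝ) * Real.sqrt d) * T / (1 - T ^ 2) ^ 3 :=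
  time_derivative_velocity_bound_general d π₁ hsupp T R hT1 hR t ht x hx
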